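/- Let (X,d) be a CAT(0) space enjoying the positive angles property, c(x,y) = d(x,y)²/2, and x ∈ X. Then there exists r > 0 such that if y₁, y₂ ∈ B(x,r) satisfy D_x c(x, y₁; γ) = D_x c(x, y₂; γ) for every geodesic γ through x, then y₁ = y₂ (the twist condition). -/
import Mathlib


open Set MeasureTheory Metric Filter

def IsGeodesicSegment {X : Type*} [MetricSpace X] (γ : ℝ → X) : Prop :=
  ∀ s ∈ Set.Icc (0:ℝ) 1, ∀ t ∈ Set.Icc (0:ℝ) 1,
    dist (γ s) (γ t) = |s - t| * dist (γ 0) (γ 1)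

def GeodesicSpace (X : Type*) [MetricSpace X] : Prop :=
  ∀ x y : X, ∃ γ : ℝ → X, γ 0 = x ∧ γ 1 = y ∧ IsGeodesicSegment γ

def CAT0 (X : Type*) [MetricSpace X] : Prop :=
  GeodesicSpace X ∧ ∀ γ : ℝ → X, IsGeodesicSegment γ → ∀ z : X, ∀ t ∈ Set.Icc (0:ℝ) 1,
    dist (γ t) z ^ 2 ≤ (1 - t) * dist (γ 0) z ^ 2 + t * dist (γ 1) z ^ 2
      - t * (1 - t) * dist (γ 0) (γ 1) ^ 2

def GeodesicIn {X : Type*} [MetricSpace X] (S : Set X) (γ : ℝ → X) : Prop :=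
  IsGeodesicSegment γ ∧ ∀ t ∈ Set.Icc (0:ℝ) 1, γ t ∈ S

/-- The Euclidean comparison angle at `x` of the triangle `(x, p, q)`. -/
noncomputable def compAngle {X : Type*} [MetricSpace X] (x p q : X) : ℝ :=
  Real.arccos ((dist x p ^ 2 + dist x q ^ 2 - dist p q ^ 2) / (2 * dist x p * dist x q))

/-- The Alexandrov (upper) angle at `x` between two geodesics issuing from `x`. -/
noncomputable def alexAngle {X : Type*} [MetricSpace X] (x : X) (γ η : ℝ → X) : ℝ :=
  Filter.limsup (fun s => compAngle x (γ s) (η s)) (nhdsWithin 0 (Set.Ioi 0))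

/-- The positive angles property of a set `B` at a point `x`: any two geodesics issuing
from `x` contained in `B`, neither a subset of the other, make a positive Alexandrov
angle at `x`. -/
def PositiveAnglesAt {X : Type*} [MetricSpace X] (x : X) (B : Set X) : Prop :=
  ∀ γ η : ℝ → X, GeodesicIn B γ → GeodesicIn B η → γ 0 = x → η 0 = x →
    ¬ (γ '' Set.Icc 0 1 ⊆ η '' Set.Icc 0 1) → ¬ (η '' Set.Icc 0 1 ⊆ γ '' Set.Icc 0 1) →
    0 < alexAngle x γ η

/-- The filter of admissible increments `h → 0` for differentiating along a geodesic at
parameter `s`. -/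
def gderivFilter (s : ℝ) : Filter ℝ :=
  nhdsWithin 0 {h : ℝ | s + h ∈ Set.Icc (0:ℝ) 1 ∧ h ≠ 0}

/-- `f` has geodesic derivative `L` at the point `γ s` along the geodesic `γ`. -/
def HasGDeriv {X : Type*} [MetricSpace X] (f : X → ℝ) (γ : ℝ → X) (s L : ℝ) : Prop :=
  Filter.Tendsto (fun h => (f (γ (s + h)) - f (γ s)) / h) (gderivFilter s) (nhds L)

def CAT0' (X : Type*) [MetricSpace X] : Prop :=
  ∀ γ : ℝ → X, IsGeodesicSegment γ → ∀ z : X, ∀ t ∈ Set.Icc (0:ℝ) 1,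
    dist (γ t) z ^ 2 ≤ (1 - t) * dist (γ 0) z ^ 2 + t * dist (γ 1) z ^ 2
      - t * (1 - t) * dist (γ 0) (γ 1) ^ 2

noncomputable def cosRatio {X : Type*} [MetricSpace X] (x p q : X) : ℝ :=
  (dist x p ^ 2 + dist x q ^ 2 - dist p q ^ 2) / (2 * dist x p * dist x q)

lemma cosRatio_comm {X : Type*} [MetricSpace X] (x p q : X) :
    cosRatio x p q = cosRatio x q p := by
  unfold cosRatio; rw [dist_comm p q]; ring_nf

lemma cosRatio_le_one {X : Type*} [MetricSpace X] {x p q : X}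
    (hp : 0 < dist x p) (hq : 0 < dist x q) : cosRatio x p q ≤ 1 := by
  rw [cosRatio, div_le_one (by positivity)]
  have h1 : |dist p x - dist q x| ≤ dist p q := abs_dist_sub_le p q x
  have h2 := abs_le.mp h1
  rw [dist_comm p x, dist_comm q x] at h2
  nlinarith [h2.1, h2.2, dist_nonneg (x := p) (y := q)]

lemma geodesic_dist {X : Type*} [MetricSpace X] {γ : ℝ → X}
    (hγ : IsGeodesicSegment γ) {t : ℝ} (ht : t ∈ Set.Icc (0:ℝ) 1) :
    dist (γ 0) (γ t) = t * dist (γ 0) (γ 1) := by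
  rw [hγ 0 ⟨le_refl 0, zero_le_one⟩ t ht]
  rw [zero_sub, abs_neg, abs_of_nonneg ht.1]

lemma geodesic_scale {X : Type*} [MetricSpace X] {γ : ℝ → X}
    (hγ : IsGeodesicSegment γ) {c : ℝ} (hc : c ∈ Set.Icc (0:ℝ) 1) :
    IsGeodesicSegment (fun t => γ (c * t)) := by
  intro s hs t ht
  have hmem : ∀ u ∈ Set.Icc (0:ℝ) 1, c * u ∈ Set.Icc (0:ℝ) 1 := by
    intro u hu
    constructor
    · exact mul_nonneg hc.1 hu.1
    · nlinarith [hc.1, hc.2, hu.1, hu.2]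
  simp only
  rw [hγ _ (hmem s hs) _ (hmem t ht), mul_zero, mul_one,
    hγ 0 ⟨le_refl 0, zero_le_one⟩ c hc]
  rw [show c * s - c * t = c * (s - t) by ring, abs_mul, abs_of_nonneg hc.1,
    zero_sub, abs_neg, abs_of_nonneg hc.1]
  ring

lemma cosRatio_mono {X : Type*} [MetricSpace X] (hX : CAT0' X) {η : ℝ → X} {x p : X}
    (hη : IsGeodesicSegment η) (hη0 : η 0 = x) (hp : 0 < dist x p)
    (hq : 0 < dist x (η 1)) {t : ℝ} (ht : t ∈ Set.Ioc (0:ℝ) 1) :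
    cosRatio x p (η 1) ≤ cosRatio x p (η t) := by
  subst hη0
  have htIcc : t ∈ Set.Icc (0:ℝ) 1 := ⟨ht.1.le, ht.2⟩
  have hdt : dist (η 0) (η t) = t * dist (η 0) (η 1) := geodesic_dist hη htIcc
  have hcat := hX η hη p t htIcc
  have hdp : (0:ℝ) < dist p (η 0) := by rwa [dist_comm]
  rw [cosRatio, cosRatio, hdt, dist_comm (η 0) p]
  rw [div_le_div_iff₀ (mul_pos (mul_pos two_pos hdp) hq)
    (mul_pos (mul_pos two_pos hdp) (mul_pos ht.1 hq))]
  have h1 : dist (η t) p ^ 2 ≤ (1 - t) * dist (η 0) p ^ 2 + t * dist (η 1) p ^ 2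
      - t * (1 - t) * dist (η 0) (η 1) ^ 2 := hcat
  rw [dist_comm (η 0) p] at h1
  have h2 : dist p (η t) = dist (η t) p := dist_comm _ _
  rw [h2]
  have h3 : dist p (η 1) = dist (η 1) p := dist_comm _ _
  rw [h3]
  nlinarith [mul_le_mul_of_nonneg_right h1 (by positivity : (0:ℝ) ≤ 2 * dist p (η 0) * dist (η 0) (η 1)), ht.1, sq_nonneg (dist (η 0) (η 1)), dist_nonneg (x := η 0) (y := η 1)]

lemma cosRatio_antitoneOn {X : Type*} [MetricSpace X] (hX : CAT0' X) {γ : ℝ → X} {x z : X}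
    (hγ : IsGeodesicSegment γ) (hγ0 : γ 0 = x) (hd1 : 0 < dist (γ 0) (γ 1))
    (hz : 0 < dist x z) :
    AntitoneOn (fun s => cosRatio x (γ s) z) (Set.Ioo (0:ℝ) 1) := by
  intro s hs s' hs' hss
  simp only
  have hs'Icc : s' ∈ Set.Icc (0:ℝ) 1 := ⟨hs'.1.le, hs'.2.le⟩
  set η : ℝ → X := fun u => γ (s' * u) with hηdef
  have hη : IsGeodesicSegment η := geodesic_scale hγ hs'Icc
  have hη0 : η 0 = x := by simp [hηdef, hγ0, mul_zero]
  have hη1 : η 1 = γ s' := by simp [hηdef]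
  have hηt : η (s / s') = γ s := by
    simp only [hηdef]
    rw [mul_div_cancel₀ _ (ne_of_gt hs'.1)]
  have hq : 0 < dist x (η 1) := by
    rw [hη1, ← hγ0, geodesic_dist hγ hs'Icc]
    exact mul_pos hs'.1 hd1
  have ht : s / s' ∈ Set.Ioc (0:ℝ) 1 := by
    constructor
    · exact div_pos hs.1 hs'.1
    · exact div_le_one_of_le₀ hss hs'.1.le
  have := cosRatio_mono hX hη hη0 hz hq ht
  rw [hη1, hηt] at this
  rw [cosRatio_comm x (γ s') z, cosRatio_comm x (γ s) z]
  exact this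

lemma gderivFilter_zero : gderivFilter 0 = nhdsWithin (0:ℝ) (Set.Ioi 0) := by
  unfold gderivFilter
  have h : {h : ℝ | (0:ℝ) + h ∈ Set.Icc (0:ℝ) 1 ∧ h ≠ 0} = Set.Ioc (0:ℝ) 1 := by
    ext h
    simp only [Set.mem_setOf_eq, zero_add, Set.mem_Icc, Set.mem_Ioc, ne_eq]
    constructor
    · rintro ⟨⟨h0, h1⟩, hne⟩
      exact ⟨lt_of_le_of_ne h0 (Ne.symm hne), h1⟩
    · rintro ⟨h0, h1⟩
      exact ⟨⟨h0.le, h1⟩, ne_of_gt h0⟩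
  rw [h, nhdsWithin_Ioc_eq_nhdsGT zero_lt_one]

lemma Ioc_mem_gderivFilter_zero : Set.Ioc (0:ℝ) 1 ∈ gderivFilter 0 := by
  rw [gderivFilter_zero]
  exact Ioc_mem_nhdsGT_of_mem ⟨le_refl 0, zero_lt_one⟩

/-- derivative of `d(·, γ 1)²/2` along `γ` at `0` is `-d(γ0,γ1)²`. -/
lemma hasGDeriv_self {X : Type*} [MetricSpace X] {γ : ℝ → X}
    (hγ : IsGeodesicSegment γ) :
    HasGDeriv (fun z => dist z (γ 1) ^ 2 / 2) γ 0 (-(dist (γ 0) (γ 1) ^ 2)) := by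
  unfold HasGDeriv
  have heq : ∀ h ∈ Set.Ioc (0:ℝ) 1,
      ((fun z => dist z (γ 1) ^ 2 / 2) (γ (0 + h)) - (fun z => dist z (γ 1) ^ 2 / 2) (γ 0)) / h
        = (h - 2) * dist (γ 0) (γ 1) ^ 2 / 2 := by
    intro h hh
    simp only [zero_add]
    have hd : dist (γ h) (γ 1) = (1 - h) * dist (γ 0) (γ 1) := by
      rw [hγ h ⟨hh.1.le, hh.2⟩ 1 ⟨zero_le_one, le_refl 1⟩, abs_of_nonpos (by linarith [hh.2])]
      ring_nf
    have hne : h ≠ 0 := ne_of_gt hh.1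
    rw [hd]
    field_simp
    ring
  have h2 : Filter.Tendsto (fun h : ℝ => (h - 2) * dist (γ 0) (γ 1) ^ 2 / 2)
      (gderivFilter 0) (nhds (-(dist (γ 0) (γ 1) ^ 2))) := by
    have hc : Continuous (fun h : ℝ => (h - 2) * dist (γ 0) (γ 1) ^ 2 / 2) := by continuity
    have hle : gderivFilter 0 ≤ nhds 0 := by
      rw [gderivFilter_zero]; exact nhdsWithin_le_nhds
    have h0 : ((0:ℝ) - 2) * dist (γ 0) (γ 1) ^ 2 / 2 = -(dist (γ 0) (γ 1) ^ 2) := by ring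
    rw [← h0]
    exact (hc.tendsto 0).mono_left hle
  refine h2.congr' ?_
  filter_upwards [Ioc_mem_gderivFilter_zero] with h hh
  exact (heq h hh).symm

/-- derivative of `d(·, γ 0)²/2` along `γ` at `0` is `0`. -/
lemma hasGDeriv_base {X : Type*} [MetricSpace X] {γ : ℝ → X}
    (hγ : IsGeodesicSegment γ) :
    HasGDeriv (fun z => dist z (γ 0) ^ 2 / 2) γ 0 0 := by
  unfold HasGDeriv
  have h2 : Filter.Tendsto (fun h : ℝ => h * dist (γ 0) (γ 1) ^ 2 / 2)
      (gderivFilter 0) (nhds 0) := by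
    have hc : Continuous (fun h : ℝ => h * dist (γ 0) (γ 1) ^ 2 / 2) := by continuity
    have hle : gderivFilter 0 ≤ nhds 0 := by
      rw [gderivFilter_zero]; exact nhdsWithin_le_nhds
    simpa using (hc.tendsto 0).mono_left hle
  refine h2.congr' ?_
  filter_upwards [Ioc_mem_gderivFilter_zero] with h hh
  have hd : dist (γ h) (γ 0) = h * dist (γ 0) (γ 1) := by
    rw [dist_comm, geodesic_dist hγ ⟨hh.1.le, hh.2⟩]
  have hne : h ≠ 0 := ne_of_gt hh.1
  simp only [zero_add, hd, dist_self]
  field_simp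
  ring

lemma cross_deriv {X : Type*} [MetricSpace X] (hX : CAT0' X) {γ : ℝ → X} {x z : X}
    (hγ : IsGeodesicSegment γ) (hγ0 : γ 0 = x) (hd1 : 0 < dist x (γ 1))
    (hd2 : 0 < dist x z) :
    ∃ M, M ≤ 1 ∧
      Filter.Tendsto (fun s => cosRatio x (γ s) z) (nhdsWithin 0 (Set.Ioi 0)) (nhds M) ∧
      HasGDeriv (fun w => dist w z ^ 2 / 2) γ 0 (-(dist x (γ 1) * dist x z * M)) := by
  have hd1' : 0 < dist (γ 0) (γ 1) := by rwa [hγ0]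
  set A : ℝ → ℝ := fun s => cosRatio x (γ s) z with hA
  have hxs : ∀ s ∈ Set.Icc (0:ℝ) 1, dist x (γ s) = s * dist x (γ 1) := by
    intro s hs
    rw [← hγ0, geodesic_dist hγ hs, hγ0]
  have hant : AntitoneOn A (Set.Ioo 0 1) := cosRatio_antitoneOn hX hγ hγ0 hd1' hd2
  have hbdd : BddAbove (A '' Set.Ioo 0 1) := by
    refine ⟨1, ?_⟩
    rintro _ ⟨s, hs, rfl⟩
    refine cosRatio_le_one ?_ hd2
    rw [hxs s ⟨hs.1.le, hs.2.le⟩]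
    exact mul_pos hs.1 hd1
  have hne : (Set.Ioo (0:ℝ) 1).Nonempty := ⟨1/2, by norm_num⟩
  have htend : Filter.Tendsto A (nhdsWithin 0 (Set.Ioi 0))
      (nhds (sSup (A '' Set.Ioo 0 1))) :=
    hant.tendsto_nhdsWithin_Ioo_right hne hbdd
  set M : ℝ := sSup (A '' Set.Ioo 0 1) with hM
  have hM1 : M ≤ 1 := by
    refine csSup_le (hne.image A) ?_
    rintro _ ⟨s, hs, rfl⟩
    refine cosRatio_le_one ?_ hd2
    rw [hxs s ⟨hs.1.le, hs.2.le⟩]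
    exact mul_pos hs.1 hd1
  refine ⟨M, hM1, htend, ?_⟩
  unfold HasGDeriv
  have heq : ∀ h ∈ Set.Ioc (0:ℝ) 1,
      ((fun w => dist w z ^ 2 / 2) (γ (0 + h)) - (fun w => dist w z ^ 2 / 2) (γ 0)) / h
        = h * dist x (γ 1) ^ 2 / 2 - dist x (γ 1) * dist x z * A h := by
    intro h hh
    have hne0 : h ≠ 0 := ne_of_gt hh.1
    have hxh : dist x (γ h) = h * dist x (γ 1) := hxs h ⟨hh.1.le, hh.2⟩
    simp only [zero_add, hγ0, hA, cosRatio, hxh]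
    have hd1ne : dist x (γ 1) ≠ 0 := ne_of_gt hd1
    have hd2ne : dist x z ≠ 0 := ne_of_gt hd2
    field_simp
    ring
  have h2 : Filter.Tendsto
      (fun h : ℝ => h * dist x (γ 1) ^ 2 / 2 - dist x (γ 1) * dist x z * A h)
      (gderivFilter 0) (nhds (-(dist x (γ 1) * dist x z * M))) := by
    rw [gderivFilter_zero]
    have t1 : Filter.Tendsto (fun h : ℝ => h * dist x (γ 1) ^ 2 / 2)
        (nhdsWithin 0 (Set.Ioi 0)) (nhds 0) := by
      have hc : Continuous (fun h : ℝ => h * dist x (γ 1) ^ 2 / 2) :=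
        (continuous_id.mul continuous_const).div_const 2
      simpa using (hc.tendsto 0).mono_left nhdsWithin_le_nhds
    have t2 : Filter.Tendsto (fun h : ℝ => dist x (γ 1) * dist x z * A h)
        (nhdsWithin 0 (Set.Ioi 0)) (nhds (dist x (γ 1) * dist x z * M)) :=
      htend.const_mul _
    have := t1.sub t2
    simpa using this
  refine h2.congr' ?_
  filter_upwards [Ioc_mem_gderivFilter_zero] with h hh
  exact (heq h hh).symm

lemma arccos_antitone {a b : ℝ} (h : a ≤ b) : Real.arccos b ≤ Real.arccos a := by
  unfold Real.arccos
  exact sub_le_sub_left (Real.monotone_arcsin h) _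

/-- The twist condition in a CAT(0) space with the positive angles property: for each `x`
there is `r > 0` such that if `y₁, y₂ ∈ B(x,r)` and the geodesic derivatives of
`c(·,y₁) = d(·,y₁)²/2` and `c(·,y₂)` at `x` agree along every geodesic through `x`,
then `y₁ = y₂`. -/
theorem twist_condition_of_positiveAngles
    {X : Type*} [MetricSpace X] (hX : CAT0 X)
    (hpa : ∀ x : X, ∃ r > (0:ℝ), PositiveAnglesAt x (Metric.ball x r)) :
    ∀ x : X, ∃ r > (0:ℝ), ∀ y₁ ∈ Metric.ball x r, ∀ y₂ ∈ Metric.ball x r,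
      (∀ (γ : ℝ → X) (s L₁ L₂ : ℝ), IsGeodesicSegment γ → s ∈ Set.Icc (0:ℝ) 1 → γ s = x →
        HasGDeriv (fun z => dist z y₁ ^ 2 / 2) γ s L₁ →
        HasGDeriv (fun z => dist z y₂ ^ 2 / 2) γ s L₂ → L₁ = L₂) →
      y₁ = y₂ := by
  intro x
  obtain ⟨r, hr, hpos⟩ := hpa x
  refine ⟨r, hr, ?_⟩
  intro y₁ hy₁ y₂ hy₂ H
  obtain ⟨γ, hγ0, hγ1, hγ⟩ := hX.1 x y₁
  obtain ⟨η, hη0, hη1, hη⟩ := hX.1 x y₂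
  have hcat : CAT0' X := hX.2
  have zeroIcc : (0:ℝ) ∈ Set.Icc (0:ℝ) 1 := ⟨le_refl 0, zero_le_one⟩
  have oneIcc : (1:ℝ) ∈ Set.Icc (0:ℝ) 1 := ⟨zero_le_one, le_refl 1⟩
  have Dγself : HasGDeriv (fun w => dist w y₁ ^ 2 / 2) γ 0 (-(dist x y₁ ^ 2)) := by
    have := hasGDeriv_self hγ
    rwa [hγ0, hγ1] at this
  have Dηself : HasGDeriv (fun w => dist w y₂ ^ 2 / 2) η 0 (-(dist x y₂ ^ 2)) := by
    have := hasGDeriv_self hη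
    rwa [hη0, hη1] at this
  by_cases h1 : dist x y₁ = 0
  · by_cases h2 : dist x y₂ = 0
    · rw [← dist_eq_zero.mp h1, ← dist_eq_zero.mp h2]
    · have hd2 : 0 < dist x y₂ := lt_of_le_of_ne dist_nonneg (Ne.symm h2)
      have D1 : HasGDeriv (fun w => dist w y₁ ^ 2 / 2) η 0 0 := by
        have := hasGDeriv_base hη
        rwa [hη0.trans (dist_eq_zero.mp h1)] at this
      have := H η 0 0 (-(dist x y₂ ^ 2)) hη zeroIcc hη0 D1 Dηself
      exfalso
      nlinarith [pow_pos hd2 2]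
  · by_cases h2 : dist x y₂ = 0
    · have hd1 : 0 < dist x y₁ := lt_of_le_of_ne dist_nonneg (Ne.symm h1)
      have D2 : HasGDeriv (fun w => dist w y₂ ^ 2 / 2) γ 0 0 := by
        have := hasGDeriv_base hγ
        rwa [hγ0.trans (dist_eq_zero.mp h2)] at this
      have := H γ 0 (-(dist x y₁ ^ 2)) 0 hγ zeroIcc hγ0 Dγself D2
      exfalso
      nlinarith [pow_pos hd1 2]
    · have hd1 : 0 < dist x y₁ := lt_of_le_of_ne dist_nonneg (Ne.symm h1)
      have hd2 : 0 < dist x y₂ := lt_of_le_of_ne dist_nonneg (Ne.symm h2)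
      have hd1' : 0 < dist x (γ 1) := by rwa [hγ1]
      have hd2' : 0 < dist x (η 1) := by rwa [hη1]
      obtain ⟨M, hM1, hMt, hMg⟩ := cross_deriv hcat hγ hγ0 hd1' hd2
      obtain ⟨M', hM'1, hM't, hM'g⟩ := cross_deriv hcat hη hη0 hd2' hd1
      have e1 := H γ 0 (-(dist x y₁ ^ 2)) (-(dist x (γ 1) * dist x y₂ * M)) hγ zeroIcc hγ0
        Dγself hMg
      rw [hγ1] at e1
      have e2 := H η 0 (-(dist x (η 1) * dist x y₁ * M')) (-(dist x y₂ ^ 2)) hη zeroIcc hη0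
        hM'g Dηself
      rw [hη1] at e2
      have hle1 : dist x y₁ ≤ dist x y₂ := by
        nlinarith [mul_le_mul_of_nonneg_left hM1 (le_of_lt (mul_pos hd1 hd2))]
      have hle2 : dist x y₂ ≤ dist x y₁ := by
        nlinarith [mul_le_mul_of_nonneg_left hM'1 (le_of_lt (mul_pos hd2 hd1))]
      have hdd : dist x y₁ = dist x y₂ := le_antisymm hle1 hle2
      have hMeq : M = 1 := by
        rw [hdd] at e1
        have h' : dist x y₂ * dist x y₂ * M = dist x y₂ * dist x y₂ * 1 := by nlinarith
        exact mul_left_cancel₀ (ne_of_gt (mul_pos hd2 hd2)) h'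
      have htend1 : Filter.Tendsto (fun s => cosRatio x (γ s) y₂)
          (nhdsWithin 0 (Set.Ioi 0)) (nhds 1) := hMeq ▸ hMt
      have hθ : Filter.Tendsto (fun s => compAngle x (γ s) y₂)
          (nhdsWithin 0 (Set.Ioi 0)) (nhds 0) := by
        have h' := (Real.continuous_arccos.tendsto 1).comp htend1
        rw [Real.arccos_one] at h'
        exact h'
      have hsq : Filter.Tendsto (fun s => compAngle x (γ s) (η s))
          (nhdsWithin 0 (Set.Ioi 0)) (nhds 0) := by
        refine tendsto_of_tendsto_of_tendsto_of_le_of_le' tendsto_const_nhds hθ ?_ ?_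
        · filter_upwards with s
          exact Real.arccos_nonneg _
        · filter_upwards [Ioc_mem_nhdsGT_of_mem ⟨le_refl (0:ℝ), zero_lt_one⟩] with s hs
          have hps : 0 < dist x (γ s) := by
            rw [← hγ0, geodesic_dist hγ ⟨hs.1.le, hs.2⟩, hγ0, hγ1]
            exact mul_pos hs.1 hd1
          have hmono := cosRatio_mono hcat hη hη0 hps hd2' hs
          have harc : Real.arccos (cosRatio x (γ s) (η s))
              ≤ Real.arccos (cosRatio x (γ s) (η 1)) := arccos_antitone hmono
          rw [hη1] at harc
          exact harc
      have hangle : alexAngle x γ η = 0 := hsq.limsup_eq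
      have hγin : GeodesicIn (Metric.ball x r) γ := by
        refine ⟨hγ, fun t ht => ?_⟩
        rw [Metric.mem_ball, dist_comm, ← hγ0, geodesic_dist hγ ht, hγ0, hγ1]
        have hry : dist x y₁ < r := by rw [dist_comm]; exact hy₁
        nlinarith [ht.1, ht.2, dist_nonneg (x := x) (y := y₁)]
      have hηin : GeodesicIn (Metric.ball x r) η := by
        refine ⟨hη, fun t ht => ?_⟩
        rw [Metric.mem_ball, dist_comm, ← hη0, geodesic_dist hη ht, hη0, hη1]
        have hry : dist x y₂ < r := by rw [dist_comm]; exact hy₂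
        nlinarith [ht.1, ht.2, dist_nonneg (x := x) (y := y₂)]
      by_cases c1 : γ '' Set.Icc 0 1 ⊆ η '' Set.Icc 0 1
      · obtain ⟨t, ht, hte⟩ := c1 ⟨1, oneIcc, rfl⟩
        have hdt : dist x (η t) = t * dist x y₂ := by
          rw [← hη0, geodesic_dist hη ht, hη0, hη1]
        rw [hte, hγ1, ← hdd] at hdt
        have ht1 : t = 1 := by
          have h' : t * dist x y₁ = 1 * dist x y₁ := by rw [← hdt, hdd]; ring
          exact mul_right_cancel₀ (ne_of_gt hd1) h'
        rw [← hγ1, ← hte, ht1, hη1]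
      · by_cases c2 : η '' Set.Icc 0 1 ⊆ γ '' Set.Icc 0 1
        · obtain ⟨t, ht, hte⟩ := c2 ⟨1, oneIcc, rfl⟩
          have hdt : dist x (γ t) = t * dist x y₁ := by
            rw [← hγ0, geodesic_dist hγ ht, hγ0, hγ1]
          rw [hte, hη1, hdd] at hdt
          have ht1 : t = 1 := by
            have h' : t * dist x y₂ = 1 * dist x y₂ := by rw [← hdt, ← hdd]; ring
            exact mul_right_cancel₀ (ne_of_gt hd2) h'
          rw [← hη1, ← hte, ht1, hγ1]
        · exfalso
          have := hpos γ η hγin hηin hγ0 hη0 c1 c2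
          rw [hangle] at this
          exact lt_irrefl 0 this
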